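/- arXiv:2603.16564 — 3 statements merged into one kernel-verified Lean document; each statement's English description precedes it below -/
import Mathlib

section
/- For l = 1, …, m let A_l and B_l be Hermitian square complex matrices of the same size N×N satisfying A_l² = I, B_l² = I, and A_l B_l = −B_l A_l, let v_l be a unit vector with B_l v_l = v_l, and let θ_1, …, θ_m be real numbers. Define ψ := (exp(θ_1 • A_1B_1) v_1) ⊗ ⋯ ⊗ (exp(θ_m • A_mB_m) v_m), a vector in the m-fold Kronecker product space, and for a fixed k define M_k := I^{⊗(k−1)} ⊗ B_k ⊗ I^{⊗(m−k)}. Then ⟨ψ, M_k ψ⟩ = cos²θ_k − sin²θ_k, which lies in the interval [−1, 1]. -/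
open Matrix

/-- The Kronecker product `M 0 ⊗ M 1 ⊗ ⋯ ⊗ M (m-1)` of `m` matrices of size `N × N`,
realized as a matrix on the space indexed by `Fin m → Fin N`. -/
def tensorMat (m N : ℕ) (M : Fin m → Matrix (Fin N) (Fin N) ℂ) :
    Matrix (Fin m → Fin N) (Fin m → Fin N) ℂ :=
  Matrix.of fun x y => ∏ l, M l (x l) (y l)

/-- The Kronecker product `w 0 ⊗ w 1 ⊗ ⋯ ⊗ w (m-1)` of `m` vectors of length `N`,
realized as a vector indexed by `Fin m → Fin N`. -/
def tensorVecN (m N : ℕ) (w : Fin m → (Fin N → ℂ)) : (Fin m → Fin N) → ℂ :=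
  fun x => ∏ l, w l (x l)

/-!
Since `(A_l B_l)² = -1`, the rotation `exp(θ A_l B_l)` sends `v_l` to
`cos θ • v_l + sin θ • A_l v_l`, and `v_l`, `A_l v_l` are orthonormal eigenvectors of `B_l` for
the eigenvalues `1` and `-1` (anticommutation moves `A_l v_l` into the `-1`-eigenspace). Hence
each factor of `ψ` is a unit vector whose `B_l`-expectation is `cos² θ - sin² θ`. The expectation
of a Kronecker product in a product state is the product of the single-factor expectations, all
of which are norms `1` except the `k`-th.
-/

theorem star_tensorVecN (m N : ℕ) (w : Fin m → Fin N → ℂ) :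
    star (tensorVecN m N w) = tensorVecN m N (star w) := by
  ext x
  simp [tensorVecN, star_prod]

theorem tensorMat_mulVec_tensorVecN (m N : ℕ) (M : Fin m → Matrix (Fin N) (Fin N) ℂ)
    (w : Fin m → Fin N → ℂ) :
    tensorMat m N M *ᵥ tensorVecN m N w = tensorVecN m N (fun l => M l *ᵥ w l) := by
  ext x
  simp only [mulVec, dotProduct, tensorMat, tensorVecN, of_apply, ← Finset.prod_mul_distrib]
  exact (Fintype.prod_sum fun l j => M l (x l) j * w l j).symm

theorem tensorVecN_dotProduct_tensorVecN (m N : ℕ) (w w' : Fin m → Fin N → ℂ) :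
    tensorVecN m N w ⬝ᵥ tensorVecN m N w' = ∏ l, w l ⬝ᵥ w' l := by
  simp only [dotProduct, tensorVecN, ← Finset.prod_mul_distrib]
  exact (Fintype.prod_sum fun l j => w l j * w' l j).symm

theorem exp_ofReal_smul_of_mul_self_eq_neg_one {𝔸 : Type*} [NormedRing 𝔸] [NormedAlgebra ℂ 𝔸]
    [CompleteSpace 𝔸] (x : 𝔸) (hx : x * x = -1) (θ : ℝ) :
    NormedSpace.exp ((θ : ℂ) • x) = (Real.cos θ : ℂ) • (1 : 𝔸) + (Real.sin θ : ℂ) • x := by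
  let _ : NormedAlgebra ℝ 𝔸 := NormedAlgebra.restrictScalars ℝ ℂ 𝔸
  let _ : Algebra ℚ 𝔸 := Algebra.compHom 𝔸 (algebraMap ℚ ℂ)
  -- `z ↦ re z + im z • x` embeds `ℂ` into `𝔸`, and a continuous ring map commutes with `exp`.
  let φ : ℂ →ₐ[ℝ] 𝔸 := Complex.liftAux x hx
  have hφ : φ ((θ : ℂ) * Complex.I) = (θ : ℂ) • x := by
    simp [φ, Complex.liftAux_apply]
  rw [← hφ, ← NormedSpace.map_exp φ (φ.toLinearMap.continuous_of_finiteDimensional),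
    ← Complex.exp_eq_exp_ℂ, Complex.exp_mul_I, ← Complex.ofReal_cos, ← Complex.ofReal_sin]
  simp only [φ, Complex.liftAux_apply, Complex.add_re, Complex.add_im, Complex.ofReal_re,
    Complex.ofReal_im, Complex.re_ofReal_mul, Complex.im_ofReal_mul, Complex.I_re, Complex.I_im,
    mul_zero, mul_one, add_zero, zero_add, Complex.coe_smul, Algebra.algebraMap_eq_smul_one]

/-- `NormedSpace.exp` depends only on the topology, so any algebra norm on matrices will do. -/
theorem Matrix.exp_ofReal_smul_of_mul_self_eq_neg_one {n : Type*} [Fintype n] [DecidableEq n]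
    (C : Matrix n n ℂ) (hC : C * C = -1) (θ : ℝ) :
    NormedSpace.exp ((θ : ℂ) • C) = (Real.cos θ : ℂ) • (1 : Matrix n n ℂ) + (Real.sin θ : ℂ) • C :=
  letI : NormedRing (Matrix n n ℂ) := Matrix.linftyOpNormedRing
  letI : NormedAlgebra ℂ (Matrix n n ℂ) := Matrix.linftyOpNormedAlgebra
  _root_.exp_ofReal_smul_of_mul_self_eq_neg_one C hC θ

theorem mul_mul_self_eq_neg_one_of_anticomm {R : Type*} [Ring R] {a b : R} (ha : a * a = 1)
    (hb : b * b = 1) (hab : a * b = -(b * a)) : a * b * (a * b) = -1 := by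
  calc a * b * (a * b) = a * (b * a) * b := by noncomm_ring
    _ = -(a * a * (b * b)) := by rw [← neg_eq_iff_eq_neg.mpr hab]; noncomm_ring
    _ = -1 := by rw [ha, hb, one_mul]

section SingleFactor

variable {n : Type*} [Fintype n] {A B : Matrix n n ℂ} {u v w : n → ℂ}

theorem Matrix.IsHermitian.star_dotProduct_eq_zero_of_mulVec_eq_neg (hB : B.IsHermitian)
    (hv : B *ᵥ v = v) (hu : B *ᵥ u = -u) : star v ⬝ᵥ u = 0 := by
  have h : star v ⬝ᵥ u = -(star v ⬝ᵥ u) :=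
    calc star v ⬝ᵥ u = star (B *ᵥ v) ⬝ᵥ u := by rw [hv]
      _ = star v ⬝ᵥ B *ᵥ u := by rw [star_mulVec, hB.eq, dotProduct_mulVec]
      _ = -(star v ⬝ᵥ u) := by rw [hu, dotProduct_neg]
  exact self_eq_neg.mp h

theorem mulVec_mulVec_eq_neg_of_anticomm (hAB : A * B = -(B * A)) (hv : B *ᵥ v = v) :
    B *ᵥ (A *ᵥ v) = -(A *ᵥ v) := by
  rw [mulVec_mulVec, ← neg_eq_iff_eq_neg.mpr hAB, neg_mulVec, ← mulVec_mulVec, hv]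

theorem star_mulVec_dotProduct_mulVec_of_conjTranspose_mul_self [DecidableEq n]
    (hA : Aᴴ * A = 1) :
    star (A *ᵥ v) ⬝ᵥ A *ᵥ w = star v ⬝ᵥ w := by
  rw [star_mulVec, ← dotProduct_mulVec, mulVec_mulVec, hA, one_mulVec]

theorem star_smul_add_smul_dotProduct_smul_add_smul (hv : star v ⬝ᵥ v = 1)
    (hu : star u ⬝ᵥ u = 1) (hvu : star v ⬝ᵥ u = 0) (a b c d : ℝ) :
    star ((a : ℂ) • v + (b : ℂ) • u) ⬝ᵥ ((c : ℂ) • v + (d : ℂ) • u) =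
      ((a * c + b * d : ℝ) : ℂ) := by
  have huv : star u ⬝ᵥ v = 0 := by rw [star_dotProduct, hvu, star_zero]
  simp only [star_add, star_smul, Complex.star_def, Complex.conj_ofReal, add_dotProduct,
    dotProduct_add, smul_dotProduct, dotProduct_smul, hv, hu, hvu, huv, smul_eq_mul]
  push_cast
  ring

theorem exp_ofReal_smul_mul_mulVec [DecidableEq n] (hA2 : A * A = 1) (hB2 : B * B = 1)
    (hAB : A * B = -(B * A)) (hBv : B *ᵥ v = v) (θ : ℝ) :
    NormedSpace.exp ((θ : ℂ) • (A * B)) *ᵥ v =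
      (Real.cos θ : ℂ) • v + (Real.sin θ : ℂ) • A *ᵥ v := by
  rw [exp_ofReal_smul_of_mul_self_eq_neg_one _ (mul_mul_self_eq_neg_one_of_anticomm hA2 hB2 hAB),
    add_mulVec, smul_mulVec, smul_mulVec, one_mulVec, ← mulVec_mulVec, hBv]

theorem star_exp_mulVec_dotProduct [DecidableEq n] (hA : A.IsHermitian) (hB : B.IsHermitian)
    (hA2 : A * A = 1) (hB2 : B * B = 1) (hAB : A * B = -(B * A))
    (hv : star v ⬝ᵥ v = 1) (hBv : B *ᵥ v = v) (θ : ℝ) :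
    star (NormedSpace.exp ((θ : ℂ) • (A * B)) *ᵥ v) ⬝ᵥ
        B *ᵥ (NormedSpace.exp ((θ : ℂ) • (A * B)) *ᵥ v) =
      ((Real.cos θ ^ 2 - Real.sin θ ^ 2 : ℝ) : ℂ) ∧
    star (NormedSpace.exp ((θ : ℂ) • (A * B)) *ᵥ v) ⬝ᵥ
        (NormedSpace.exp ((θ : ℂ) • (A * B)) *ᵥ v) = 1 := by
  have hBu := mulVec_mulVec_eq_neg_of_anticomm hAB hBv
  have hvu := hB.star_dotProduct_eq_zero_of_mulVec_eq_neg hBv hBu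
  have huu : star (A *ᵥ v) ⬝ᵥ A *ᵥ v = 1 :=
    (star_mulVec_dotProduct_mulVec_of_conjTranspose_mul_self (by rw [hA.eq]; exact hA2)).trans hv
  have hBw : B *ᵥ ((Real.cos θ : ℂ) • v + (Real.sin θ : ℂ) • A *ᵥ v) =
      (Real.cos θ : ℂ) • v + ((-Real.sin θ : ℝ) : ℂ) • A *ᵥ v := by
    rw [mulVec_add, mulVec_smul, mulVec_smul, hBv, hBu, Complex.ofReal_neg, neg_smul, smul_neg]
  rw [exp_ofReal_smul_mul_mulVec hA2 hB2 hAB hBv, hBw,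
    star_smul_add_smul_dotProduct_smul_add_smul hv huu hvu,
    star_smul_add_smul_dotProduct_smul_add_smul hv huu hvu]
  refine ⟨by congr 1; ring, ?_⟩
  rw [← sq, ← sq, Real.cos_sq_add_sin_sq, Complex.ofReal_one]

end SingleFactor

theorem tensor_expectation_value (m N : ℕ)
    (A B : Fin m → Matrix (Fin N) (Fin N) ℂ)
    (hA : ∀ l, (A l).IsHermitian) (hB : ∀ l, (B l).IsHermitian)
    (hA2 : ∀ l, A l * A l = 1) (hB2 : ∀ l, B l * B l = 1)
    (hAB : ∀ l, A l * B l = -(B l * A l))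
    (v : Fin m → (Fin N → ℂ))
    (hv : ∀ l, star (v l) ⬝ᵥ v l = 1) (hBv : ∀ l, (B l).mulVec (v l) = v l)
    (θ : Fin m → ℝ) (k : Fin m)
    (ψ : (Fin m → Fin N) → ℂ)
    (hψ : ψ = tensorVecN m N (fun l =>
      (NormedSpace.exp ((θ l : ℂ) • (A l * B l))).mulVec (v l)))
    (Mk : Matrix (Fin m → Fin N) (Fin m → Fin N) ℂ)
    (hMk : Mk = tensorMat m N (fun l => if l = k then B k else 1)) :
    star ψ ⬝ᵥ Mk.mulVec ψ = ((Real.cos (θ k) ^ 2 - Real.sin (θ k) ^ 2 : ℝ) : ℂ) ∧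
    (Real.cos (θ k) ^ 2 - Real.sin (θ k) ^ 2) ∈ Set.Icc (-1 : ℝ) 1 := by
  have hfactor := fun l => star_exp_mulVec_dotProduct (hA l) (hB l) (hA2 l) (hB2 l) (hAB l)
    (hv l) (hBv l) (θ l)
  refine ⟨?_, ?_⟩
  · rw [hψ, hMk, star_tensorVecN, tensorMat_mulVec_tensorVecN, tensorVecN_dotProduct_tensorVecN,
      Finset.prod_eq_single k]
    · simp only [Pi.star_apply]
      exact (hfactor k).1
    · intro l _ hl
      simp only [Pi.star_apply, if_neg hl, one_mulVec]
      exact (hfactor l).2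
    · exact fun hk => absurd (Finset.mem_univ k) hk
  · rw [← Real.cos_two_mul']
    exact ⟨Real.neg_one_le_cos _, Real.cos_le_one _⟩
end

section
/- Let α and β be orthonormal vectors in a complex inner product space, let θ be real, and set ψ := cos θ • α + sin θ • β. Let O be a linear endomorphism satisfying O α = α and O β = −β, and define the Grover operator G := (2 P_ψ − I) ∘ O, where P_ψ is the orthogonal projection x ↦ ⟨ψ, x⟩ • ψ. Then for every natural number k, the k-fold iterate satisfies G^k ψ = cos((2k+1)θ) • α + sin((2k+1)θ) • β. -/
/-!
On the real span of `α` and `β` the vectors `cos c • α + sin c • β` form a circle, `O` is the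
reflection in the `α`-axis and `2 P_ψ - I` the reflection in the line through `ψ`, at angle `θ`.
Their composite `G` is therefore the rotation by `2θ`, and `G ^ k` moves `ψ` from angle `θ` to
angle `(2k + 1)θ`.
-/

open InnerProductSpace

local notation "⟪" x ", " y "⟫" => @inner ℂ _ _ x y

noncomputable def cosSinVec (𝕜 : Type*) {V : Type*} [RCLike 𝕜] [AddCommGroup V] [Module 𝕜 V]
    (α β : V) (c : ℝ) : V :=
  (Real.cos c : 𝕜) • α + (Real.sin c : 𝕜) • β

def reflectionAbout (𝕜 : Type*) {V : Type*} [RCLike 𝕜] [NormedAddCommGroup V]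
    [InnerProductSpace 𝕜 V] (ψ : V) : V →ₗ[𝕜] V :=
  (2 : 𝕜) • ((LinearMap.toSpanSingleton 𝕜 V ψ).comp (innerₛₗ 𝕜 ψ)) - LinearMap.id

section

variable {𝕜 V : Type*} [RCLike 𝕜] [NormedAddCommGroup V] [InnerProductSpace 𝕜 V]

variable {α β : V}

lemma inner_cosSinVec (hαα : inner 𝕜 α α = 1) (hββ : inner 𝕜 β β = 1) (hαβ : inner 𝕜 α β = 0)
    (a c : ℝ) : inner 𝕜 (cosSinVec 𝕜 α β a) (cosSinVec 𝕜 α β c) = (Real.cos (c - a) : 𝕜) := by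
  have hβα : inner 𝕜 β α = 0 := by rw [← inner_conj_symm, hαβ, map_zero]
  simp only [cosSinVec, inner_add_left, inner_add_right, inner_smul_left, inner_smul_right,
    hαα, hββ, hαβ, hβα, RCLike.conj_ofReal, Real.cos_sub]
  push_cast
  ring

lemma reflectionAbout_cosSinVec (hαα : inner 𝕜 α α = 1) (hββ : inner 𝕜 β β = 1)
    (hαβ : inner 𝕜 α β = 0) (a c : ℝ) :
    reflectionAbout 𝕜 (cosSinVec 𝕜 α β a) (cosSinVec 𝕜 α β c) = cosSinVec 𝕜 α β (2 * a - c) := by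
  obtain ⟨b, rfl⟩ : ∃ b, c = a + b := ⟨c - a, by ring⟩
  have hcos : Real.cos (2 * a - (a + b)) = 2 * Real.cos b * Real.cos a - Real.cos (a + b) := by
    rw [show 2 * a - (a + b) = a - b by ring, Real.cos_sub, Real.cos_add]
    ring
  have hsin : Real.sin (2 * a - (a + b)) = 2 * Real.cos b * Real.sin a - Real.sin (a + b) := by
    rw [show 2 * a - (a + b) = a - b by ring, Real.sin_sub, Real.sin_add]
    ring
  simp only [reflectionAbout, LinearMap.sub_apply, LinearMap.smul_apply, LinearMap.comp_apply,
    innerₛₗ_apply_apply, LinearMap.toSpanSingleton_apply, LinearMap.id_apply,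
    inner_cosSinVec hαα hββ hαβ, add_sub_cancel_left]
  simp only [cosSinVec, hcos, hsin]
  push_cast
  module

end

lemma map_cosSinVec_of_reflection {𝕜 V : Type*} [RCLike 𝕜] [AddCommGroup V] [Module 𝕜 V]
    {α β : V} (O : V →ₗ[𝕜] V) (hOα : O α = α) (hOβ : O β = -β) (c : ℝ) :
    O (cosSinVec 𝕜 α β c) = cosSinVec 𝕜 α β (-c) := by
  simp [cosSinVec, hOα, hOβ]

lemma Module.End.pow_apply_of_apply_eq_add {R M A : Type*} [Semiring R] [AddCommMonoid M]
    [Module R M] [AddMonoid A] (f : Module.End R M) (v : A → M) (d : A)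
    (hf : ∀ c, f (v c) = v (c + d)) (c : A) (k : ℕ) : (f ^ k) (v c) = v (c + k • d) := by
  induction k with
  | zero => simp
  | succ k ih => rw [pow_succ', Module.End.mul_apply, ih, hf, succ_nsmul, add_assoc]

theorem grover_iterate_state (V : Type*) [NormedAddCommGroup V] [InnerProductSpace ℂ V]
    (α β : V) (hαα : ⟪α, α⟫ = 1) (hββ : ⟪β, β⟫ = 1) (hαβ : ⟪α, β⟫ = 0)
    (θ : ℝ) (ψ : V) (hψ : ψ = (Real.cos θ : ℂ) • α + (Real.sin θ : ℂ) • β)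
    (O : V →ₗ[ℂ] V) (hOα : O α = α) (hOβ : O β = -β)
    (G : V →ₗ[ℂ] V)
    (hG : G = ((2 : ℂ) • ((LinearMap.toSpanSingleton ℂ V ψ).comp (innerₛₗ ℂ ψ))
      - LinearMap.id) ∘ₗ O) :
    ∀ k : ℕ, (G ^ k) ψ
      = (Real.cos ((2 * k + 1) * θ) : ℂ) • α + (Real.sin ((2 * k + 1) * θ) : ℂ) • β := by
  intro k
  replace hψ : ψ = cosSinVec ℂ α β θ := hψ
  replace hG : G = reflectionAbout ℂ ψ ∘ₗ O := hG
  have hG_rotates : ∀ c, G (cosSinVec ℂ α β c) = cosSinVec ℂ α β (c + 2 * θ) := by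
    intro c
    rw [hG, LinearMap.comp_apply, map_cosSinVec_of_reflection O hOα hOβ, hψ,
      reflectionAbout_cosSinVec hαα hββ hαβ]
    ring_nf
  calc (G ^ k) ψ = cosSinVec ℂ α β (θ + k • (2 * θ)) := by
        rw [hψ, Module.End.pow_apply_of_apply_eq_add G _ _ hG_rotates]
    _ = cosSinVec ℂ α β ((2 * k + 1) * θ) := by rw [nsmul_eq_mul]; ring_nf
end

section
/- Let α and β be orthonormal vectors in a complex inner product space, let θ be real, and set ψ := cos θ • α + sin θ • β. Let O be a linear endomorphism satisfying O α = α and O β = −β, and define the Grover operator G := (2 P_ψ − I) ∘ O, where P_ψ is the orthogonal projection x ↦ ⟨ψ, x⟩ • ψ. Then for every natural number k, the probability of obtaining the solution after k iterations satisfies |⟨β, G^k ψ⟩|² = sin²((2k+1)θ). -/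
/-!
In the plane spanned by the orthonormal pair `α, β`, the oracle `O` is the reflection in the
`α`-axis and `2 P_ψ - I` is the reflection in the line through `ψ`, which makes the angle `θ`
with `α`. Their composite is the rotation by `2θ`, so `G ^ k ψ` is the unit vector at angle
`(2k+1)θ`, whose `β`-coordinate is `sin ((2k+1)θ)`.
-/

open InnerProductSpace

local notation "⟪" x ", " y "⟫" => @inner ℂ _ _ x y

namespace Grover

variable {V : Type*} [NormedAddCommGroup V] [InnerProductSpace ℂ V]

noncomputable def planeVec (α β : V) (φ : ℝ) : V :=
  (Real.cos φ : ℂ) • α + (Real.sin φ : ℂ) • β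

lemma map_planeVec_eq_planeVec_neg {α β : V} {O : V →ₗ[ℂ] V} (hOα : O α = α) (hOβ : O β = -β)
    (φ : ℝ) : O (planeVec α β φ) = planeVec α β (-φ) := by
  simp [planeVec, hOα, hOβ, Real.cos_neg, Real.sin_neg]

lemma inner_right_planeVec {α β : V} (hββ : ⟪β, β⟫ = 1) (hαβ : ⟪α, β⟫ = 0) (φ : ℝ) :
    ⟪β, planeVec α β φ⟫ = (Real.sin φ : ℂ) := by
  have hβα : ⟪β, α⟫ = 0 := by rw [← inner_conj_symm, hαβ, map_zero]
  simp only [planeVec, inner_add_right, inner_smul_right, hββ, hβα, mul_zero, mul_one, zero_add]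

section Orthonormal

variable {α β : V} (hαα : ⟪α, α⟫ = 1) (hββ : ⟪β, β⟫ = 1) (hαβ : ⟪α, β⟫ = 0)
include hαα hββ hαβ

lemma inner_planeVec_planeVec (θ φ : ℝ) :
    ⟪planeVec α β θ, planeVec α β φ⟫ = (Real.cos (φ - θ) : ℂ) := by
  have hβα : ⟪β, α⟫ = 0 := by rw [← inner_conj_symm, hαβ, map_zero]
  simp only [planeVec, inner_add_left, inner_add_right, inner_smul_left, inner_smul_right,
    hαα, hββ, hαβ, hβα, Complex.conj_ofReal, Real.cos_sub]
  push_cast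
  ring

lemma reflect_planeVec (θ φ : ℝ) :
    (2 : ℂ) • (⟪planeVec α β θ, planeVec α β φ⟫ • planeVec α β θ) - planeVec α β φ
      = planeVec α β (2 * θ - φ) := by
  rw [inner_planeVec_planeVec hαα hββ hαβ]
  have hcos : Real.cos (2 * θ - φ) = 2 * Real.cos (φ - θ) * Real.cos θ - Real.cos φ := by
    simp only [Real.cos_sub, Real.cos_two_mul, Real.sin_two_mul]
    ring
  have hsin : Real.sin (2 * θ - φ) = 2 * Real.cos (φ - θ) * Real.sin θ - Real.sin φ := by
    simp only [Real.cos_sub, Real.sin_sub, Real.cos_two_mul, Real.sin_two_mul]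
    linear_combination (-2 * Real.sin φ) * Real.sin_sq_add_cos_sq θ
  simp only [planeVec, hcos, hsin]
  push_cast
  module

end Orthonormal

end Grover

open Grover in
theorem grover_success_probability (V : Type*) [NormedAddCommGroup V] [InnerProductSpace ℂ V]
    (α β : V) (hαα : ⟪α, α⟫ = 1) (hββ : ⟪β, β⟫ = 1) (hαβ : ⟪α, β⟫ = 0)
    (θ : ℝ) (ψ : V) (hψ : ψ = (Real.cos θ : ℂ) • α + (Real.sin θ : ℂ) • β)
    (O : V →ₗ[ℂ] V) (hOα : O α = α) (hOβ : O β = -β)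
    (G : V →ₗ[ℂ] V)
    (hG : G = ((2 : ℂ) • ((LinearMap.toSpanSingleton ℂ V ψ).comp (innerₛₗ ℂ ψ))
      - LinearMap.id) ∘ₗ O) :
    ∀ k : ℕ, ‖⟪β, (G ^ k) ψ⟫‖ ^ 2 = Real.sin ((2 * k + 1) * θ) ^ 2 := by
  have hrot : ∀ φ, G (planeVec α β φ) = planeVec α β (φ + 2 * θ) := fun φ => by
    subst hψ hG
    simp only [LinearMap.comp_apply, map_planeVec_eq_planeVec_neg hOα hOβ, LinearMap.sub_apply,
      LinearMap.smul_apply, LinearMap.toSpanSingleton_apply, innerₛₗ_apply_apply,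
      LinearMap.id_apply]
    rw [← planeVec, reflect_planeVec hαα hββ hαβ]
    congr 1
    ring
  have hiter : ∀ k : ℕ, (G ^ k) ψ = planeVec α β ((2 * k + 1) * θ) := by
    intro k
    induction k with
    | zero => simpa [planeVec] using hψ
    | succ n ih =>
      rw [pow_succ', Module.End.mul_apply, ih, hrot]
      congr 1
      push_cast
      ring
  intro k
  rw [hiter, inner_right_planeVec hββ hαβ, Complex.norm_real, Real.norm_eq_abs, sq_abs]
end
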